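/- arXiv:1102.1460 — 2 statements merged into one kernel-verified Lean document; each statement's English description precedes it below -/
import Mathlib

section
/- Contraction Principle: For 1 ≤ p < ∞, real numbers a_1,…,a_n, independent symmetric ±1 random variables (Rademacher functions) r_1,…,r_n, and vectors x_1,…,x_n in a Banach space E, one has (∫ ‖∑_{k≤n} a_k r_k(ω) x_k‖^p dP)^{1/p} ≤ (max_{k≤n} |a_k|) · (∫ ‖∑_{k≤n} r_k(ω) x_k‖^p dP)^{1/p}. -/
open Filter MeasureTheory Topology

noncomputable def rademacher (j : ℕ) (t : ℝ) : ℝ := (-1 : ℝ) ^ ⌊t * 2 ^ (j + 1)⌋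

noncomputable def radSum {F : Type*} [NormedAddCommGroup F] [NormedSpace ℝ F]
    (x : ℕ → F) (m : ℕ) (t : ℝ) : F :=
  ∑ j ∈ Finset.range m, rademacher j t • x j

/-- Membership in `Rad(F)`: the partial sums of `∑ rⱼ(·) xⱼ` converge in `L₂([0,1];F)`. -/
def RadMem {F : Type*} [NormedAddCommGroup F] [NormedSpace ℝ F] (x : ℕ → F) : Prop :=
  ∃ S : ℝ → F,
    Tendsto (fun m => ∫ t in (0:ℝ)..1, ‖radSum x m t - S t‖ ^ 2) atTop (nhds 0)

/-- The `Rad(F)` norm: `(∫₀¹ ‖∑_{j=1}^∞ rⱼ(t) xⱼ‖² dt)^{1/2}`, as the limit of the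
corresponding quantities for the partial sums. -/
noncomputable def RadNorm {F : Type*} [NormedAddCommGroup F] [NormedSpace ℝ F]
    (x : ℕ → F) : ℝ :=
  limUnder atTop (fun m => (∫ t in (0:ℝ)..1, ‖radSum x m t‖ ^ 2) ^ ((1:ℝ)/2))

/-- The weak-`p` norm of the first `m` terms of a sequence. -/
noncomputable def weakNormFin {E : Type*} [NormedAddCommGroup E] [NormedSpace ℝ E]
    (p : ℝ) (x : ℕ → E) (m : ℕ) : ℝ :=
  ⨆ φ : {φ : E →L[ℝ] ℝ // ‖φ‖ ≤ 1},
    (∑ j ∈ Finset.range m, |φ.1 (x j)| ^ p) ^ (1/p)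

/-- The weak-`p` norm of a sequence. -/
noncomputable def weakNorm {E : Type*} [NormedAddCommGroup E] [NormedSpace ℝ E]
    (p : ℝ) (x : ℕ → E) : ℝ :=
  ⨆ φ : {φ : E →L[ℝ] ℝ // ‖φ‖ ≤ 1}, (∑' j, |φ.1 (x j)| ^ p) ^ (1/p)

/-- Membership in `ℓ_p^u(E)`: weakly `p`-summable with tails tending to zero in weak-`p` norm. -/
def MemLpU {E : Type*} [NormedAddCommGroup E] [NormedSpace ℝ E]
    (p : ℝ) (x : ℕ → E) : Prop :=
  (∀ φ : E →L[ℝ] ℝ, Summable fun j => |φ (x j)| ^ p) ∧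
    Tendsto (fun m => weakNorm p fun j => x (j + m)) atTop (nhds 0)

/-- `T` is almost `(p,…,p)`-summing at the point `a`. -/
def AlmostSummingAt {n : ℕ} {E : Fin n → Type*} [∀ i, NormedAddCommGroup (E i)]
    [∀ i, NormedSpace ℝ (E i)] {F : Type*} [NormedAddCommGroup F] [NormedSpace ℝ F]
    (p : ℝ) (T : ContinuousMultilinearMap ℝ E F) (a : ∀ i, E i) : Prop :=
  ∀ x : ∀ i, ℕ → E i, (∀ i, MemLpU p (x i)) →
    RadMem (fun j => T (fun i => a i + x i j) - T a)

/-- `T` is everywhere almost `(p,…,p)`-summing. -/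
def EvAlmostSumming {n : ℕ} {E : Fin n → Type*} [∀ i, NormedAddCommGroup (E i)]
    [∀ i, NormedSpace ℝ (E i)] {F : Type*} [NormedAddCommGroup F] [NormedSpace ℝ F]
    (p : ℝ) (T : ContinuousMultilinearMap ℝ E F) : Prop :=
  ∀ a : ∀ i, E i, AlmostSummingAt p T a

/-- The norm `‖T‖_{al,p}^{ev}`: the best constant in the finite characterization. -/
noncomputable def evNorm {n : ℕ} {E : Fin n → Type*} [∀ i, NormedAddCommGroup (E i)]
    [∀ i, NormedSpace ℝ (E i)] {F : Type*} [NormedAddCommGroup F] [NormedSpace ℝ F]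
    (p : ℝ) (T : ContinuousMultilinearMap ℝ E F) : ℝ :=
  sInf {C : ℝ | 0 ≤ C ∧ ∀ (m : ℕ) (a : ∀ i, E i) (x : ∀ i, ℕ → E i),
    (∫ t in (0:ℝ)..1,
        ‖radSum (fun j => T (fun i => a i + x i j) - T a) m t‖ ^ 2) ^ ((1:ℝ)/2)
      ≤ C * ∏ i, (‖a i‖ + weakNormFin p (x i) m)}

/-- A linear operator is almost `p`-summing. -/
def LinAlmostSumming {E F : Type*} [NormedAddCommGroup E] [NormedSpace ℝ E]
    [NormedAddCommGroup F] [NormedSpace ℝ F] (p : ℝ) (u : E →L[ℝ] F) : Prop :=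
  ∀ x : ℕ → E, MemLpU p x → RadMem fun j => u (x j)

/-- The almost `p`-summing norm of a linear operator. -/
noncomputable def linNorm {E F : Type*} [NormedAddCommGroup E] [NormedSpace ℝ E]
    [NormedAddCommGroup F] [NormedSpace ℝ F] (p : ℝ) (u : E →L[ℝ] F) : ℝ :=
  sInf {C : ℝ | 0 ≤ C ∧ ∀ (m : ℕ) (x : ℕ → E),
    (∫ t in (0:ℝ)..1, ‖radSum (fun j => u (x j)) m t‖ ^ 2) ^ ((1:ℝ)/2)
      ≤ C * weakNormFin p x m}


/-!
On each dyadic interval of length `2⁻ⁿ` the vector `(r₀(t), …, rₙ₋₁(t))` is constant, and it runs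
through all `2ⁿ` sign vectors as the interval varies. Hence `c ↦ ∫₀¹ ‖∑ cₖ rₖ(t) xₖ‖ᵖ dt` is a finite
average of convex functions of `c`, so it is convex, and it is invariant under flipping the sign of
one coefficient (flipping one bit permutes the intervals). Since `cₖ` lies between `-M` and `M`,
where such a function takes equal values, replacing `cₖ` by `M` can only increase it; doing this for
every `k` bounds the value at `a` by the value at `(M, …, M)`, which is `Mᵖ` times the value at
`(1, …, 1)`.
-/

open Set Function

section ConvexSymmetric

variable {ι : Type*} [DecidableEq ι] {Φ : (ι → ℝ) → ℝ}

lemma ConvexOn.le_update_of_abs_le (hΦ : ConvexOn ℝ univ Φ)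
    (hsymm : ∀ c k, Φ (update c k (-c k)) = Φ c) {c : ι → ℝ} {k : ι} {M : ℝ}
    (hck : |c k| ≤ M) : Φ c ≤ Φ (update c k M) := by
  obtain ⟨a, b, ha, hb, hab, hcomb⟩ : c k ∈ segment ℝ (-M) M := by
    rw [segment_eq_Icc (by linarith [abs_nonneg (c k)])]
    exact abs_le.mp hck
  have hc : a • update c k (-M) + b • update c k M = c := by
    ext j
    rcases eq_or_ne j k with rfl | hj
    · simpa using hcomb
    · simp [hj, ← add_mul, hab]
  have hflip : Φ (update c k (-M)) = Φ (update c k M) := by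
    simpa using hsymm (update c k M) k
  calc Φ c = Φ (a • update c k (-M) + b • update c k M) := by rw [hc]
    _ ≤ max (Φ (update c k (-M))) (Φ (update c k M)) :=
      hΦ.le_on_segment' (mem_univ _) (mem_univ _) ha hb hab
    _ = Φ (update c k M) := by rw [hflip, max_self]

lemma ConvexOn.le_const_of_abs_le [Fintype ι] (hΦ : ConvexOn ℝ univ Φ)
    (hsymm : ∀ c k, Φ (update c k (-c k)) = Φ c) {c : ι → ℝ} {M : ℝ}
    (hc : ∀ k, |c k| ≤ M) : Φ c ≤ Φ (fun _ => M) := by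
  suffices h : ∀ s : Finset ι, Φ c ≤ Φ (s.piecewise (fun _ => M) c) by
    simpa using h Finset.univ
  intro s
  induction s using Finset.induction_on with
  | empty => simp
  | insert k s _ ih =>
    rw [Finset.piecewise_insert]
    refine ih.trans (hΦ.le_update_of_abs_le hsymm ?_)
    by_cases hk : k ∈ s
    · rw [Finset.piecewise_eq_of_mem _ _ _ hk, abs_of_nonneg ((abs_nonneg (c k)).trans (hc k))]
    · simpa [hk] using hc k

end ConvexSymmetric

lemma ConvexOn.sum {E ι : Type*} [AddCommGroup E] [Module ℝ E] {s : Set E}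
    (hs : Convex ℝ s) {t : Finset ι} {f : ι → E → ℝ} (hf : ∀ i ∈ t, ConvexOn ℝ s (f i)) :
    ConvexOn ℝ s fun v => ∑ i ∈ t, f i v := by
  induction t using Finset.cons_induction with
  | empty => simpa using convexOn_const 0 hs
  | cons i t hi ih =>
    simp only [Finset.sum_cons]
    exact (hf i (Finset.mem_cons_self i t)).add (ih fun j hj => hf j (Finset.mem_cons_of_mem hj))

lemma convexOn_norm_rpow {E : Type*} [NormedAddCommGroup E] [NormedSpace ℝ E] {p : ℝ}
    (hp : 1 ≤ p) : ConvexOn ℝ univ fun v : E => ‖v‖ ^ p := by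
  refine ⟨convex_univ, fun v _ w _ a b ha hb hab => ?_⟩
  calc ‖a • v + b • w‖ ^ p ≤ (a * ‖v‖ + b * ‖w‖) ^ p := by
        gcongr
        refine (norm_add_le _ _).trans_eq ?_
        rw [norm_smul_of_nonneg ha, norm_smul_of_nonneg hb]
    _ ≤ a • ‖v‖ ^ p + b • ‖w‖ ^ p :=
      (convexOn_rpow hp).2 (norm_nonneg v) (norm_nonneg w) ha hb hab

section StepFunction

variable {F : Type*} [NormedAddCommGroup F]

lemma intervalIntegrable_of_eqOn_Ioo {f : ℝ → F} {a b : ℝ} {c : F} (hab : a ≤ b)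
    (hf : EqOn f (fun _ => c) (Ioo a b)) : IntervalIntegrable f volume a b := by
  rw [intervalIntegrable_iff_integrableOn_Ioc_of_le hab, integrableOn_Ioc_iff_integrableOn_Ioo]
  exact (integrableOn_const measure_Ioo_lt_top.ne).congr_fun hf.symm measurableSet_Ioo

variable [NormedSpace ℝ F] [CompleteSpace F]

lemma intervalIntegral_eq_of_eqOn_Ioo {f : ℝ → F} {a b : ℝ} {c : F} (hab : a ≤ b)
    (hf : EqOn f (fun _ => c) (Ioo a b)) : ∫ t in a..b, f t = (b - a) • c := by
  rw [intervalIntegral.integral_of_le hab, integral_Ioc_eq_integral_Ioo,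
    setIntegral_congr_fun measurableSet_Ioo hf, setIntegral_const, measureReal_def,
    Real.volume_Ioo, ENNReal.toReal_ofReal (sub_nonneg.mpr hab)]

lemma intervalIntegral_zero_one_eq_of_dyadic (n : ℕ) {f : ℝ → F} {c : ℕ → F}
    (hf : ∀ i < 2 ^ n, EqOn f (fun _ => c i) (Ioo ((i : ℝ) / 2 ^ n) ((i + 1) / 2 ^ n))) :
    ∫ t in (0 : ℝ)..1, f t = (2 ^ n : ℝ)⁻¹ • ∑ i ∈ Finset.range (2 ^ n), c i := by
  set a : ℕ → ℝ := fun i => i / 2 ^ n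
  have hstep : ∀ i : ℕ, a i ≤ a (i + 1) := fun i => by simp only [a]; gcongr; simp
  have hf' : ∀ i < 2 ^ n, EqOn f (fun _ => c i) (Ioo (a i) (a (i + 1))) := by
    simpa [a] using hf
  have h0 : a 0 = 0 := by simp [a]
  have h1 : a (2 ^ n) = 1 := by simp [a]
  rw [← h0, ← h1, ← intervalIntegral.sum_integral_adjacent_intervals
    fun i hi => intervalIntegrable_of_eqOn_Ioo (hstep i) (hf' i hi), Finset.smul_sum]
  refine Finset.sum_congr rfl fun i hi => ?_
  rw [intervalIntegral_eq_of_eqOn_Ioo (hstep i) (hf' i (Finset.mem_range.mp hi))]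
  congr 1
  simp only [a]; push_cast; ring

end StepFunction

/-- The value of `rademacher k` on the dyadic interval `(i / 2ⁿ, (i + 1) / 2ⁿ)`: the sign given by
bit `n - 1 - k` of `i`. -/
noncomputable def dyadicSign (n i : ℕ) (k : Fin n) : ℝ := (-1) ^ (i / 2 ^ (n - 1 - k.val))

lemma rademacher_eq_dyadicSign {n i : ℕ} {t : ℝ} (ht : ⌊t * 2 ^ n⌋ = i) (k : Fin n) :
    rademacher k t = dyadicSign n i k := by
  have hpow : t * 2 ^ (k.val + 1) = t * 2 ^ n / ((2 ^ (n - 1 - k.val) : ℕ) : ℝ) := by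
    rw [eq_div_iff (by positivity), mul_assoc, Nat.cast_pow, Nat.cast_ofNat, ← pow_add,
      show k.val + 1 + (n - 1 - k.val) = n by omega]
  rw [rademacher, hpow, Int.floor_div_natCast, ht, ← Int.natCast_div, zpow_natCast, dyadicSign]

lemma neg_one_pow_div_two_pow (i j : ℕ) :
    (-1 : ℝ) ^ (i / 2 ^ j) = if i.testBit j then -1 else 1 := by
  rw [Nat.testBit_eq_decide_div_mod_eq]
  rcases Nat.even_or_odd (i / 2 ^ j) with h | h
  · simp [h.neg_one_pow, Nat.even_iff.mp h]
  · simp [h.neg_one_pow, Nat.odd_iff.mp h]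

lemma dyadicSign_xor_two_pow (n i : ℕ) (k : Fin n) :
    dyadicSign n (i ^^^ 2 ^ (n - 1 - k.val)) = update (dyadicSign n i) k (-dyadicSign n i k) := by
  ext j
  simp only [dyadicSign, neg_one_pow_div_two_pow, Nat.testBit_xor, Nat.testBit_two_pow]
  rcases eq_or_ne j k with rfl | hj
  · cases i.testBit (n - 1 - j) <;> simp
  · have : n - 1 - k.val ≠ n - 1 - j.val := by have := Fin.val_ne_of_ne hj; omega
    simp [hj, this, dyadicSign, neg_one_pow_div_two_pow]

lemma sum_range_dyadicSign_update_neg {M : Type*} [AddCommMonoid M] (n : ℕ)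
    (g : (Fin n → ℝ) → M) (k : Fin n) :
    ∑ i ∈ Finset.range (2 ^ n), g (update (dyadicSign n i) k (-dyadicSign n i k)) =
      ∑ i ∈ Finset.range (2 ^ n), g (dyadicSign n i) := by
  set m := 2 ^ (n - 1 - k.val)
  have hm : m < 2 ^ n := Nat.pow_lt_pow_right one_lt_two (by omega)
  have hinv : ∀ i, i ^^^ m ^^^ m = i := fun i => by rw [Nat.xor_assoc, Nat.xor_self, Nat.xor_zero]
  simp_rw [← dyadicSign_xor_two_pow]
  refine Finset.sum_nbij' (· ^^^ m) (· ^^^ m) (fun i hi => ?_) (fun i hi => ?_)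
    (fun i _ => hinv i) (fun i _ => hinv i) (fun i _ => rfl) <;>
  simpa using Nat.xor_lt_two_pow (Finset.mem_range.mp hi) hm

lemma intervalIntegral_comp_rademacher {F : Type*} [NormedAddCommGroup F] [NormedSpace ℝ F]
    [CompleteSpace F] (n : ℕ) (g : (Fin n → ℝ) → F) :
    ∫ t in (0 : ℝ)..1, g (fun k => rademacher k t) =
      (2 ^ n : ℝ)⁻¹ • ∑ i ∈ Finset.range (2 ^ n), g (dyadicSign n i) := by
  refine intervalIntegral_zero_one_eq_of_dyadic n fun i _ t ht => ?_
  have hfloor : ⌊t * 2 ^ n⌋ = i := by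
    rw [Int.floor_eq_iff, Int.cast_natCast, ← div_le_iff₀ (by positivity),
      ← lt_div_iff₀ (by positivity)]
    exact ⟨ht.1.le, ht.2⟩
  simp only [rademacher_eq_dyadicSign hfloor]

section RademacherMoment

variable {E : Type*} [NormedAddCommGroup E] [NormedSpace ℝ E] {n : ℕ}

noncomputable def rademacherMoment (p : ℝ) (x : Fin n → E) (c : Fin n → ℝ) : ℝ :=
  ∫ t in (0 : ℝ)..1, ‖∑ k, (c k * rademacher k t) • x k‖ ^ p

lemma rademacherMoment_nonneg (p : ℝ) (x : Fin n → E) (c : Fin n → ℝ) :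
    0 ≤ rademacherMoment p x c :=
  intervalIntegral.integral_nonneg zero_le_one fun _ _ => Real.rpow_nonneg (norm_nonneg _) p

lemma rademacherMoment_eq_sum (p : ℝ) (x : Fin n → E) (c : Fin n → ℝ) :
    rademacherMoment p x c = (2 ^ n : ℝ)⁻¹ *
      ∑ i ∈ Finset.range (2 ^ n), ‖∑ k, (c k * dyadicSign n i k) • x k‖ ^ p :=
  intervalIntegral_comp_rademacher n fun ε => ‖∑ k, (c k * ε k) • x k‖ ^ p

lemma rademacherMoment_update_neg (p : ℝ) (x : Fin n → E) (c : Fin n → ℝ) (k : Fin n) :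
    rademacherMoment p x (update c k (-c k)) = rademacherMoment p x c := by
  rw [rademacherMoment_eq_sum, rademacherMoment_eq_sum,
    ← sum_range_dyadicSign_update_neg n (fun ε => ‖∑ j, (c j * ε j) • x j‖ ^ p) k]
  refine congrArg _ (Finset.sum_congr rfl fun i _ => ?_)
  congr 2
  refine Finset.sum_congr rfl fun j _ => ?_
  rcases eq_or_ne j k with rfl | hj
  · simp
  · simp [hj]

lemma convexOn_rademacherMoment {p : ℝ} (hp : 1 ≤ p) (x : Fin n → E) :
    ConvexOn ℝ univ (rademacherMoment p x) := by
  have hterm : ∀ i, ConvexOn ℝ univ fun c : Fin n → ℝ =>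
      ‖∑ k, (c k * dyadicSign n i k) • x k‖ ^ p := fun i => by
    have h := (convexOn_norm_rpow hp).comp_linearMap
      (Fintype.linearCombination ℝ fun k => dyadicSign n i k • x k)
    exact h.congr fun c _ => by simp [Fintype.linearCombination_apply, smul_smul]
  rw [funext (rademacherMoment_eq_sum p x)]
  exact (ConvexOn.sum convex_univ fun i _ => hterm i).smul (by positivity)

lemma rademacherMoment_smul {p : ℝ} (x : Fin n → E) {M : ℝ} (hM : 0 ≤ M) (c : Fin n → ℝ) :
    rademacherMoment p x (M • c) = M ^ p * rademacherMoment p x c := by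
  rw [rademacherMoment, rademacherMoment, ← intervalIntegral.integral_const_mul]
  congr 1
  funext t
  rw [← Real.mul_rpow hM (norm_nonneg _), ← norm_smul_of_nonneg hM, Finset.smul_sum]
  simp only [Pi.smul_apply, smul_eq_mul, smul_smul, mul_assoc]

end RademacherMoment

theorem contraction_principle_general {E : Type*} [NormedAddCommGroup E] [NormedSpace ℝ E]
    (p : ℝ) (hp : 1 ≤ p) (n : ℕ) (a : Fin n → ℝ) (x : Fin n → E) :
    (∫ t in (0:ℝ)..1, ‖∑ k, (a k * rademacher k.val t) • x k‖ ^ p) ^ (1/p) ≤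
      (⨆ k, |a k|) *
        (∫ t in (0:ℝ)..1, ‖∑ k, rademacher k.val t • x k‖ ^ p) ^ (1/p) := by
  set M := ⨆ k, |a k|
  have hM : 0 ≤ M := Real.iSup_nonneg fun k => abs_nonneg (a k)
  have ha : ∀ k, |a k| ≤ M := le_ciSup (Set.finite_range _).bddAbove
  have hmoment : rademacherMoment p x a ≤ M ^ p * rademacherMoment p x 1 :=
    calc rademacherMoment p x a ≤ rademacherMoment p x (fun _ => M) :=
          (convexOn_rademacherMoment hp x).le_const_of_abs_le
            (rademacherMoment_update_neg p x) ha
      _ = rademacherMoment p x (M • 1) := by congr; ext; simp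
      _ = M ^ p * rademacherMoment p x 1 := rademacherMoment_smul x hM 1
  calc rademacherMoment p x a ^ (1 / p)
      ≤ (M ^ p * rademacherMoment p x 1) ^ (1 / p) := by
        gcongr
        exact rademacherMoment_nonneg p x a
    _ = M * rademacherMoment p x 1 ^ (1 / p) := by
        rw [Real.mul_rpow (by positivity) (rademacherMoment_nonneg p x 1), ← Real.rpow_mul hM,
          mul_one_div_cancel (by linarith), Real.rpow_one]
    _ = _ := by simp [rademacherMoment]

theorem contraction_principle {E : Type*} [NormedAddCommGroup E] [NormedSpace ℝ E]
    [CompleteSpace E] (p : ℝ) (hp : 1 ≤ p) (n : ℕ) (a : Fin n → ℝ) (x : Fin n → E) :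
    (∫ t in (0:ℝ)..1, ‖∑ k, (a k * rademacher k.val t) • x k‖ ^ p) ^ (1/p) ≤
      (⨆ k, |a k|) *
        (∫ t in (0:ℝ)..1, ‖∑ k, rademacher k.val t • x k‖ ^ p) ^ (1/p) :=
  contraction_principle_general p hp n a x
end

section
/- Let 1 < p ≤ 2 and let T : E₁ × ⋯ × Eₙ → F be a continuous n-linear operator between Banach spaces. If there exists C ≥ 0 such that for all m, all x_j^{(k)} ∈ E_k and all (a₁,…,aₙ), (∫₀¹ ‖∑_{j=1}^m r_j(t)[T(a₁+x_j^{(1)},…,aₙ+x_j^{(n)}) − T(a₁,…,aₙ)]‖² dt)^{1/2} ≤ C ∏_{k=1}^n (‖a_k‖ + ‖(x_j^{(k)})_{j=1}^m‖_{w,p}), then T is everywhere almost (p,…,p)-summing: for every point (a₁,…,aₙ) and all weakly p-summable null sequences (x_j^{(k)}) ∈ ℓ_p^u(E_k), the sequence (T(a₁+x_j^{(1)},…,aₙ+x_j^{(n)}) − T(a₁,…,aₙ))_j belongs to Rad(F). -/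
open Filter MeasureTheory Topology

/-!
Write `yⱼ = T(a + xⱼ) - T(a)`. Multilinearity expands `yⱼ` as the sum, over `s ⊊ univ`, of `T`
evaluated at the point with coordinates `aᵢ` for `i ∈ s` and `xⱼ⁽ⁱ⁾` for `i ∉ s`. Truncated to
`j ≥ m`, each such term is `T(a' + x'ⱼ) - T(a')` with `a'` vanishing off `s` (so `T(a') = 0`), and
the finite inequality bounds its Rademacher sums by a product containing the tail weak norm
`‖(xⱼ⁽ⁱ⁾)_{j ≥ m}‖_{w,p}` of a coordinate `i ∉ s`, which tends to zero. So the partial sums of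
`∑ rⱼ yⱼ` are Cauchy in the complete space `L₂([0,1]; F)`. The tail weak norms are finite by the
closed graph theorem applied to `φ ↦ (φ xⱼ)ⱼ : E* → ℓ_p`.
-/

open Finset

local notation "𝕀" => volume.restrict (Set.Ioc (0:ℝ) 1)

lemma integral_norm_sq_eq_norm_sq {α F : Type*} [MeasurableSpace α] {μ : Measure α}
    [NormedAddCommGroup F] (f : Lp F 2 μ) : ∫ a, ‖f a‖ ^ 2 ∂μ = ‖f‖ ^ 2 := by
  have hI : 0 ≤ ∫ a, ‖f a‖ ^ 2 ∂μ := integral_nonneg fun a => by positivity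
  rw [Lp.norm_def, (Lp.memLp f).eLpNorm_eq_integral_rpow_norm two_ne_zero ENNReal.ofNat_ne_top,
    ENNReal.toReal_ofReal (by positivity)]
  simp only [ENNReal.toReal_ofNat, Real.rpow_two]
  rw [← Real.rpow_natCast, ← Real.rpow_mul hI]
  norm_num

section Rademacher

variable {F : Type*} [NormedAddCommGroup F] [NormedSpace ℝ F]

lemma abs_rademacher (j : ℕ) (t : ℝ) : |rademacher j t| = 1 := by
  rcases Int.even_or_odd ⌊t * 2 ^ (j + 1)⌋ with h | h <;> simp [rademacher, h.neg_one_zpow]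

lemma measurable_rademacher (j : ℕ) : Measurable (rademacher j) :=
  measurable_from_top.comp (measurable_id.mul_const _).floor

lemma norm_radSum_le (z : ℕ → F) (m : ℕ) (t : ℝ) : ‖radSum z m t‖ ≤ ∑ j ∈ range m, ‖z j‖ :=
  (norm_sum_le _ _).trans_eq <| sum_congr rfl fun j _ => by
    rw [norm_smul, Real.norm_eq_abs, abs_rademacher, one_mul]

lemma memLp_radSum (z : ℕ → F) (m : ℕ) : MemLp (radSum z m) 2 𝕀 :=
  .of_bound (Finset.aestronglyMeasurable_fun_sum _ fun j _ =>
      (measurable_rademacher j).aestronglyMeasurable.smul_const (z j)) _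
    (ae_of_all _ (norm_radSum_le z m))

lemma radSum_add (z w : ℕ → F) (m : ℕ) : radSum (z + w) m = radSum z m + radSum w m := by
  ext t; simp [radSum, smul_add, sum_add_distrib]

lemma radSum_smul (c : ℝ) (z : ℕ → F) (m : ℕ) : radSum (c • z) m = c • radSum z m := by
  ext t; simp [radSum, smul_sum, smul_comm c]

lemma radSum_indicator_Ici (z : ℕ → F) {m m' : ℕ} (h : m ≤ m') :
    radSum (Set.indicator (Set.Ici m) z) m' = radSum z m' - radSum z m := by
  ext t
  simp only [radSum, Pi.sub_apply, ← sum_Ico_eq_sub _ h]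
  rw [← sum_range_add_sum_Ico _ h, sum_eq_zero fun j hj => ?_, zero_add]
  · exact sum_congr rfl fun j hj => by rw [Set.indicator_of_mem (Set.mem_Ici.2 (mem_Ico.1 hj).1)]
  · rw [Set.indicator_of_notMem (by simpa using mem_range.1 hj), smul_zero]

noncomputable def radLp (m : ℕ) : (ℕ → F) →ₗ[ℝ] Lp F 2 𝕀 where
  toFun z := (memLp_radSum z m).toLp
  map_add' z w :=
    (MemLp.toLp_congr _ _ (.of_eq (radSum_add z w m))).trans (MemLp.toLp_add _ _)
  map_smul' c z :=
    (MemLp.toLp_congr _ _ (.of_eq (radSum_smul c z m))).trans (MemLp.toLp_const_smul _ _)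

lemma coeFn_radLp (m : ℕ) (z : ℕ → F) : radLp m z =ᵐ[𝕀] radSum z m :=
  (memLp_radSum z m).coeFn_toLp

lemma norm_radLp (m : ℕ) (z : ℕ → F) :
    ‖radLp m z‖ = (∫ t in (0:ℝ)..1, ‖radSum z m t‖ ^ 2) ^ ((1:ℝ)/2) := by
  have hcongr : ∫ t, ‖radLp m z t‖ ^ 2 ∂𝕀 = ∫ t, ‖radSum z m t‖ ^ 2 ∂𝕀 :=
    integral_congr_ae ((coeFn_radLp m z).mono fun t ht => by simp only [ht])
  rw [intervalIntegral.integral_of_le zero_le_one, ← hcongr, integral_norm_sq_eq_norm_sq,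
    ← Real.sqrt_eq_rpow, Real.sqrt_sq (norm_nonneg _)]

lemma radLp_sub_radLp (z : ℕ → F) {m m' : ℕ} (h : m ≤ m') :
    radLp m' z - radLp m z = radLp m' (Set.indicator (Set.Ici m) z) :=
  (MemLp.toLp_sub (memLp_radSum z m') (memLp_radSum z m)).symm.trans
    (MemLp.toLp_congr _ (memLp_radSum _ m') (.of_eq (radSum_indicator_Ici z h).symm))

lemma radMem_of_cauchySeq [CompleteSpace F] {z : ℕ → F}
    (hz : CauchySeq fun m => radLp m z) : RadMem z := by
  obtain ⟨G, hG⟩ := cauchySeq_tendsto_of_complete hz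
  have hdist : ∀ m, ∫ t in (0:ℝ)..1, ‖radSum z m t - G t‖ ^ 2 = ‖radLp m z - G‖ ^ 2 :=
    fun m => by
    rw [intervalIntegral.integral_of_le zero_le_one, ← integral_norm_sq_eq_norm_sq]
    refine integral_congr_ae ?_
    filter_upwards [Lp.coeFn_sub (radLp m z) G, coeFn_radLp m z] with t hsub hrad
    rw [hsub, Pi.sub_apply, hrad]
  refine ⟨G, ?_⟩
  simp_rw [hdist]
  simpa using (tendsto_iff_norm_sub_tendsto_zero.mp hG).pow 2

end Rademacher

section WeakNorm

variable {E : Type*} [NormedAddCommGroup E] [NormedSpace ℝ E] {p : ℝ}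

lemma weakNormFin_nonneg (p : ℝ) (x : ℕ → E) (m : ℕ) : 0 ≤ weakNormFin p x m :=
  Real.iSup_nonneg fun _ => by positivity

lemma weakNormFin_zero (hp : p ≠ 0) (m : ℕ) : weakNormFin p (0 : ℕ → E) m = 0 := by
  simp [weakNormFin, Real.zero_rpow hp, Real.zero_rpow (inv_ne_zero hp)]

lemma bddAbove_range_tsum_rpow (hp : 1 ≤ p) {x : ℕ → E}
    (hx : ∀ φ : E →L[ℝ] ℝ, Summable fun j => |φ (x j)| ^ p) :
    BddAbove (Set.range fun φ : {φ : E →L[ℝ] ℝ // ‖φ‖ ≤ 1} =>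
      (∑' j, |φ.1 (x j)| ^ p) ^ (1/p)) := by
  have hq : (ENNReal.ofReal p).toReal = p := ENNReal.toReal_ofReal (by linarith)
  have : Fact (1 ≤ ENNReal.ofReal p) := ⟨ENNReal.one_le_ofReal.2 hp⟩
  let Φ : (E →L[ℝ] ℝ) →ₗ[ℝ] lp (fun _ : ℕ => ℝ) (ENNReal.ofReal p) :=
    { toFun φ := ⟨fun j => φ (x j), memℓp_gen (by simpa [hq, Real.norm_eq_abs] using hx φ)⟩
      map_add' _ _ := rfl
      map_smul' _ _ := rfl }
  have hΦ : Continuous Φ := Φ.continuous_of_seq_closed_graph fun u φ v hu hv => by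
    ext j
    have hφ : Tendsto (fun k => u k (x j)) atTop (𝓝 (φ (x j))) :=
      ((ContinuousLinearMap.apply ℝ ℝ (x j)).continuous.tendsto φ).comp hu
    have hv' : Tendsto (fun k => u k (x j)) atTop (𝓝 (v j)) :=
      ((lp.evalCLM ℝ (fun _ : ℕ => ℝ) (ENNReal.ofReal p) j).continuous.tendsto v).comp hv
    exact tendsto_nhds_unique hv' hφ
  let Φc : (E →L[ℝ] ℝ) →L[ℝ] lp (fun _ : ℕ => ℝ) (ENNReal.ofReal p) := ⟨Φ, hΦ⟩
  refine ⟨‖Φc‖, Set.forall_mem_range.2 fun φ => ?_⟩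
  calc (∑' j, |φ.1 (x j)| ^ p) ^ (1/p) = ‖Φc φ‖ := by
        rw [lp.norm_eq_tsum_rpow (by linarith), hq]
        rfl
    _ ≤ ‖Φc‖ := (Φc.le_opNorm_of_le φ.2).trans_eq (mul_one _)

lemma weakNormFin_indicator_Ici_le (hp : 1 ≤ p) {x : ℕ → E}
    (hx : ∀ φ : E →L[ℝ] ℝ, Summable fun j => |φ (x j)| ^ p) (m m' : ℕ) :
    weakNormFin p (Set.indicator (Set.Ici m) x) m' ≤ weakNorm p fun j => x (j + m) := by
  have hp0 : 0 < p := by linarith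
  refine Real.iSup_le (fun φ => ?_) (Real.iSup_nonneg fun _ => by positivity)
  refine le_trans ?_ (le_ciSup (bddAbove_range_tsum_rpow hp
    fun φ => (summable_nat_add_iff m).2 (hx φ)) φ)
  set f : ℕ → ℝ := fun j => |φ.1 (x j)| ^ p
  have hind : (fun j => |φ.1 (Set.indicator (Set.Ici m) x j)| ^ p)
      = Set.indicator (Set.Ici m) f :=
    (Set.indicator_comp_of_zero (g := fun v => |φ.1 v| ^ p)
      (by simp [Real.zero_rpow hp0.ne'])).symm
  have hsum : Summable (Set.indicator (Set.Ici m) f) := (hx φ).indicator _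
  gcongr
  calc ∑ j ∈ range m', |φ.1 (Set.indicator (Set.Ici m) x j)| ^ p
      ≤ ∑' j, Set.indicator (Set.Ici m) f j := by
        rw [hind]
        exact hsum.sum_le_tsum _ fun j _ => Set.indicator_nonneg (fun _ _ => by positivity) j
    _ = ∑' j, f (j + m) := by
        rw [← hsum.sum_add_tsum_nat_add m, sum_eq_zero fun j hj =>
          Set.indicator_of_notMem (by simpa using mem_range.1 hj) _, zero_add]
        exact tsum_congr fun j => Set.indicator_of_mem (by simp) _

end WeakNorm

lemma MultilinearMap.map_add_sub_map_eq_sum {R ι : Type*} [Semiring R] [Fintype ι]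
    [DecidableEq ι]
    {M : ι → Type*} [∀ i, AddCommMonoid (M i)] [∀ i, Module R (M i)] {N : Type*}
    [AddCommGroup N] [Module R N] (f : MultilinearMap R M N) (a v : ∀ i, M i) :
    f (a + v) - f a = ∑ s ∈ univ.erase univ, f (s.piecewise a v) := by
  rw [f.map_add_univ, ← add_sum_erase _ _ (mem_univ univ), piecewise_univ, add_sub_cancel_left]

lemma tendsto_sum_prod_ite_nhds_zero {α ι : Type*} [Fintype ι] [DecidableEq ι] {l : Filter α}
    (c : ι → ℝ) {τ : ι → α → ℝ} (hτ : ∀ i, Tendsto (τ i) l (𝓝 0)) :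
    Tendsto (fun k => ∑ s ∈ univ.erase univ, ∏ i, if i ∈ s then c i else τ i k) l (𝓝 0) := by
  have hterm : ∀ s ∈ univ.erase univ,
      Tendsto (fun k => ∏ i, if i ∈ s then c i else τ i k) l (𝓝 0) := fun s hs => by
    obtain ⟨i₀, hi₀⟩ : ∃ i, i ∉ s := by simpa [eq_univ_iff_forall] using ne_of_mem_erase hs
    rw [← prod_eq_zero (f := fun i => if i ∈ s then c i else 0) (mem_univ i₀) (if_neg hi₀)]
    exact tendsto_finsetProd _ fun i _ => by
      split_ifs
      exacts [tendsto_const_nhds, hτ i]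
  simpa using tendsto_finsetSum _ hterm

section FiniteInequality

variable {ι : Type*} [Fintype ι] [DecidableEq ι] {E : ι → Type*}
  [∀ i, NormedAddCommGroup (E i)] [∀ i, NormedSpace ℝ (E i)]
  {F : Type*} [NormedAddCommGroup F] [NormedSpace ℝ F] {p C : ℝ}
  {T : ContinuousMultilinearMap ℝ E F}

def HasFiniteRadBound (p : ℝ) (T : ContinuousMultilinearMap ℝ E F) (C : ℝ) : Prop :=
  ∀ (m : ℕ) (a : ∀ i, E i) (x : ∀ i, ℕ → E i),
    (∫ t in (0:ℝ)..1,
        ‖radSum (fun j => T (fun i => a i + x i j) - T a) m t‖ ^ 2) ^ ((1:ℝ)/2)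
      ≤ C * ∏ i, (‖a i‖ + weakNormFin p (x i) m)

lemma norm_radLp_indicator_piecewise_le (hT : HasFiniteRadBound p T C) (hC : 0 ≤ C)
    (hp : 1 ≤ p) (a : ∀ i, E i) {x : ∀ i, ℕ → E i}
    (hx : ∀ i (φ : E i →L[ℝ] ℝ), Summable fun j => |φ (x i j)| ^ p)
    {s : Finset ι} (hs : s ≠ univ) (m m' : ℕ) :
    ‖radLp m' (Set.indicator (Set.Ici m) fun j => T (s.piecewise a fun i => x i j))‖
      ≤ C * ∏ i, if i ∈ s then ‖a i‖ else weakNorm p fun j => x i (j + m) := by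
  obtain ⟨i₀, hi₀⟩ : ∃ i, i ∉ s := by simpa [eq_univ_iff_forall] using hs
  set a' : ∀ i, E i := s.piecewise a 0
  set x' : ∀ i, ℕ → E i := s.piecewise 0 fun i => Set.indicator (Set.Ici m) (x i)
  have hTa' : T a' = 0 := T.map_coord_zero i₀ (s.piecewise_eq_of_notMem _ _ hi₀)
  have hsplit : (Set.indicator (Set.Ici m) fun j => T (s.piecewise a fun i => x i j))
      = fun j => T (fun i => a' i + x' i j) - T a' := by
    funext j
    by_cases hj : j ∈ Set.Ici m
    · rw [Set.indicator_of_mem hj, hTa', sub_zero]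
      congr 1; funext i; by_cases hi : i ∈ s <;> simp [a', x', hi, hj]
    · rw [Set.indicator_of_notMem hj, eq_comm, sub_eq_zero]
      congr 1; funext i; by_cases hi : i ∈ s <;> simp [a', x', hi, hj]
  have hfactor : ∀ i, ‖a' i‖ + weakNormFin p (x' i) m'
      ≤ if i ∈ s then ‖a i‖ else weakNorm p fun j => x i (j + m) := by
    intro i
    by_cases hi : i ∈ s
    · simp [a', x', hi, weakNormFin_zero (by linarith : p ≠ 0)]
    · simpa [a', x', hi] using weakNormFin_indicator_Ici_le hp (hx i) m m'
  rw [hsplit, norm_radLp]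
  exact (hT m' a' x').trans <| mul_le_mul_of_nonneg_left (prod_le_prod
    (fun i _ => add_nonneg (norm_nonneg _) (weakNormFin_nonneg _ _ _)) fun i _ => hfactor i) hC

lemma dist_radLp_map_add_sub_le (hT : HasFiniteRadBound p T C) (hC : 0 ≤ C)
    (hp : 1 ≤ p) (a : ∀ i, E i) {x : ∀ i, ℕ → E i}
    (hx : ∀ i (φ : E i →L[ℝ] ℝ), Summable fun j => |φ (x i j)| ^ p) {m m' : ℕ} (h : m ≤ m') :
    dist (radLp m fun j => T (fun i => a i + x i j) - T a)
        (radLp m' fun j => T (fun i => a i + x i j) - T a)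
      ≤ C * ∑ s ∈ univ.erase univ,
        ∏ i, if i ∈ s then ‖a i‖ else weakNorm p fun j => x i (j + m) := by
  have hexpand : (Set.indicator (Set.Ici m) fun j => T (fun i => a i + x i j) - T a)
      = ∑ s ∈ univ.erase univ,
          Set.indicator (Set.Ici m) fun j => T (s.piecewise a fun i => x i j) := by
    rw [← Finset.indicator_sum]
    congr 1
    funext j
    rw [Finset.sum_apply]
    exact T.toMultilinearMap.map_add_sub_map_eq_sum a fun i => x i j
  rw [dist_comm, dist_eq_norm, radLp_sub_radLp _ h, hexpand, map_sum, mul_sum]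
  exact (norm_sum_le _ _).trans <| sum_le_sum fun s hs =>
    norm_radLp_indicator_piecewise_le hT hC hp a hx (ne_of_mem_erase hs) m m'

end FiniteInequality

theorem evAlmostSumming_of_finite_inequality_general (p : ℝ) (hp1 : 1 < p)
    {n : ℕ} {E : Fin n → Type*} [∀ i, NormedAddCommGroup (E i)]
    [∀ i, NormedSpace ℝ (E i)]
    {F : Type*} [NormedAddCommGroup F] [NormedSpace ℝ F] [CompleteSpace F]
    (T : ContinuousMultilinearMap ℝ E F) (C : ℝ) (hC : 0 ≤ C)
    (h : ∀ (m : ℕ) (a : ∀ i, E i) (x : ∀ i, ℕ → E i),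
      (∫ t in (0:ℝ)..1,
          ‖radSum (fun j => T (fun i => a i + x i j) - T a) m t‖ ^ 2) ^ ((1:ℝ)/2)
        ≤ C * ∏ i, (‖a i‖ + weakNormFin p (x i) m)) :
    EvAlmostSumming p T := by
  intro a x hx
  refine radMem_of_cauchySeq <| cauchySeq_of_le_tendsto_0' _
    (fun m m' hm => dist_radLp_map_add_sub_le h hC hp1.le a (fun i => (hx i).1) hm) ?_
  simpa using (tendsto_sum_prod_ite_nhds_zero (fun i => ‖a i‖) fun i => (hx i).2).const_mul C

theorem evAlmostSumming_of_finite_inequality (p : ℝ) (hp1 : 1 < p) (hp2 : p ≤ 2)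
    {n : ℕ} {E : Fin n → Type*} [∀ i, NormedAddCommGroup (E i)]
    [∀ i, NormedSpace ℝ (E i)] [∀ i, CompleteSpace (E i)]
    {F : Type*} [NormedAddCommGroup F] [NormedSpace ℝ F] [CompleteSpace F]
    (T : ContinuousMultilinearMap ℝ E F) (C : ℝ) (hC : 0 ≤ C)
    (h : ∀ (m : ℕ) (a : ∀ i, E i) (x : ∀ i, ℕ → E i),
      (∫ t in (0:ℝ)..1,
          ‖radSum (fun j => T (fun i => a i + x i j) - T a) m t‖ ^ 2) ^ ((1:ℝ)/2)
        ≤ C * ∏ i, (‖a i‖ + weakNormFin p (x i) m)) :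
    EvAlmostSumming p T :=
  evAlmostSumming_of_finite_inequality_general p hp1 T C hC h
end
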